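/- Let n ≥ 2 and m ≥ 1 be integers and R > 0. Let F : ℝ → ℝ be infinitely differentiable on a neighborhood of R. Suppose that ((d/ds)^l (Q_m F))(R) = 0 for every integer l ≥ 0, and that (𝒟_m^{∘l} F)(R) = 0 for every integer l with 0 ≤ l ≤ m−1, where 𝒟_m^{∘l} is the l-fold composition of 𝒟_m. Then F^{(k)}(R) = 0 for every integer k ≥ 0, i.e., F vanishes up to infinite order at R. -/

import Mathlib

open Real Filter Set
open scoped Topology

/-- The second-order operator `𝒟_k f (s) = f''(s) + (n-1)·coth(s)·f'(s)
    - (k(k+n-2)/sinh²(s))·f(s)`. -/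
noncomputable def Dop (n k : ℤ) (f : ℝ → ℝ) : ℝ → ℝ := fun s =>
  deriv (deriv f) s + ((n : ℝ) - 1) * (Real.cosh s / Real.sinh s) * deriv f s
    - ((k : ℝ) * ((k : ℝ) + (n : ℝ) - 2) / (Real.sinh s) ^ 2) * f s

/-- The first-order operator `Γ_k f (s) = f'(s) + (n+k-2)·coth(s)·f(s)`. -/
noncomputable def Gop (n k : ℤ) (f : ℝ → ℝ) : ℝ → ℝ := fun s =>
  deriv f s + ((n : ℝ) + (k : ℝ) - 2) * (Real.cosh s / Real.sinh s) * f s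

/-- `Q_m = Γ_1 ∘ Γ_2 ∘ ⋯ ∘ Γ_m` (with `Γ_m` applied first). -/
noncomputable def Qop (n : ℤ) : ℕ → (ℝ → ℝ) → (ℝ → ℝ)
  | 0 => id
  | m + 1 => fun f => Qop n m (Gop n ((m : ℤ) + 1) f)

noncomputable def cth (s : ℝ) : ℝ := Real.cosh s / Real.sinh s

noncomputable def Lop (k : ℤ) (f : ℝ → ℝ) : ℝ → ℝ := fun s =>
  deriv f s + (1 - (k : ℝ)) * cth s * f s

noncomputable def muz (n k : ℤ) : ℝ := ((k : ℝ) - 1) * ((n : ℝ) + (k : ℝ) - 2)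

/-- `goc n d a g = Γ_{a+1} ∘ ⋯ ∘ Γ_{a+d} g`. -/
noncomputable def goc (n : ℤ) : ℕ → ℕ → (ℝ → ℝ) → (ℝ → ℝ)
  | 0, _, g => g
  | d+1, a, g => Gop n ((a : ℤ) + 1) (goc n d (a+1) g)

lemma goc_pull (n : ℤ) : ∀ (d a : ℕ) (g : ℝ → ℝ),
    goc n (d+1) a g = goc n d a (Gop n ((a : ℤ) + (d : ℤ) + 1) g) := by
  intro d
  induction d with
  | zero => intro a g; show Gop n _ _ = Gop n _ _; norm_num [goc]
  | succ d ih =>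
    intro a g
    show Gop n ((a : ℤ) + 1) (goc n (d+1) (a+1) g) = Gop n ((a:ℤ)+1) (goc n d (a+1) _)
    rw [ih (a+1) g]
    push_cast
    ring_nf

lemma qop_eq_goc (n : ℤ) : ∀ (m : ℕ) (g : ℝ → ℝ), Qop n m g = goc n m 0 g := by
  intro m
  induction m with
  | zero => intro g; rfl
  | succ m ih =>
    intro g
    show Qop n m (Gop n ((m : ℤ) + 1) g) = _
    rw [ih, goc_pull n m 0 g]
    norm_num

lemma analyticAt_sinh (x : ℝ) : AnalyticAt ℝ Real.sinh x := by
  have h : AnalyticAt ℝ (fun y : ℝ => (rexp y - rexp (-y)) / 2) x := by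
    apply AnalyticAt.div
    · exact (analyticAt_id.rexp).sub ((analyticAt_id.neg).rexp)
    · exact analyticAt_const
    · norm_num
  exact h.congr (Filter.Eventually.of_forall fun y => (Real.sinh_eq y).symm)

lemma analyticAt_cosh (x : ℝ) : AnalyticAt ℝ Real.cosh x := by
  have h : AnalyticAt ℝ (fun y : ℝ => (rexp y + rexp (-y)) / 2) x := by
    apply AnalyticAt.div
    · exact (analyticAt_id.rexp).add ((analyticAt_id.neg).rexp)
    · exact analyticAt_const
    · norm_num
  exact h.congr (Filter.Eventually.of_forall fun y => (Real.cosh_eq y).symm)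

lemma analyticAt_cth {x : ℝ} (hx : Real.sinh x ≠ 0) : AnalyticAt ℝ cth x :=
  (analyticAt_cosh x).div (analyticAt_sinh x) hx

lemma deriv_cth_at {x : ℝ} (hx : Real.sinh x ≠ 0) : deriv cth x = 1 - cth x ^ 2 := by
  unfold cth
  rw [deriv_fun_div (Real.differentiable_cosh.differentiableAt)
    (Real.differentiable_sinh.differentiableAt) hx, Real.deriv_cosh, Real.deriv_sinh]
  field_simp
section Analytic

variable {n : ℤ} {I : Set ℝ}

lemma cth_sq_sub_one {s : ℝ} (hs : Real.sinh s ≠ 0) : cth s ^ 2 - 1 = 1 / Real.sinh s ^ 2 := by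
  unfold cth
  field_simp
  exact Real.cosh_sq_sub_sinh_sq s

end Analytic
noncomputable def muv (nr : ℝ) (k : ℕ) : ℝ := ((k:ℝ) - 1) * (nr + (k:ℝ) - 2)

noncomputable def Ee (nr c : ℝ) (j : ℕ) : ℕ → ℝ
  | k =>
    if h1 : k < j then 0
    else if h2 : k = j then 1
    else ((nr + 2*(k:ℝ) - 4) * c * Ee nr c j (k-1) - Ee nr c j (k-2)) / (muv nr k - muv nr j)
  termination_by k => k
  decreasing_by all_goals omega

lemma Ee_lt {nr c : ℝ} {j k : ℕ} (h : k < j) : Ee nr c j k = 0 := by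
  rw [Ee]; simp [h]

lemma Ee_self {nr c : ℝ} {j : ℕ} : Ee nr c j j = 1 := by
  rw [Ee]; simp

lemma Ee_gt {nr c : ℝ} {j k : ℕ} (h : j < k) :
    Ee nr c j k = ((nr + 2*(k:ℝ) - 4) * c * Ee nr c j (k-1) - Ee nr c j (k-2))
      / (muv nr k - muv nr j) := by
  rw [Ee]
  simp [Nat.lt_asymm h, Nat.ne_of_gt h]

lemma muv_diff {nr : ℝ} (j i : ℕ) :
    muv nr (j+i+1) - muv nr j = ((i:ℝ)+1) * (nr + 2*(j:ℝ) + (i:ℝ) - 2) := by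
  unfold muv; push_cast; ring

set_option maxHeartbeats 1000000 in
lemma Ee_pos {nr c : ℝ} (h2n : 2 ≤ nr) (hc : 1 < c) {j : ℕ} (hj : 1 ≤ j) :
    ∀ i : ℕ, 0 < Ee nr c j (j+i) ∧ Ee nr c j (j+i-1) ≤ ((i:ℝ)+1)*c*Ee nr c j (j+i) := by
  have hc0 : (0:ℝ) < c := by linarith
  have hj1 : (1:ℝ) ≤ (j:ℝ) := by exact_mod_cast hj
  intro i
  induction i with
  | zero =>
    constructor
    · simp only [Nat.add_zero, Ee_self]; norm_num
    · simp only [Nat.add_zero, Ee_self, Ee_lt (by omega : j - 1 < j), Nat.cast_zero]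
      norm_num
      linarith
  | succ i ih =>
    obtain ⟨h1, h2⟩ := ih
    have hi0 : (0:ℝ) ≤ (i:ℝ) := by positivity
    have hD : muv nr (j+i+1) - muv nr j = ((i:ℝ)+1) * (nr + 2*(j:ℝ) + (i:ℝ) - 2) :=
      muv_diff j i
    have hApos : (0:ℝ) < nr + 2*(j:ℝ) + (i:ℝ) - 2 := by nlinarith
    have hDpos : (0:ℝ) < muv nr (j+i+1) - muv nr j := by rw [hD]; positivity
    have hE := Ee_gt (nr := nr) (c := c) (show j < j+i+1 by omega)
    have hsub1 : j + i + 1 - 1 = j + i := by omega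
    have hsub2 : j + i + 1 - 2 = j + i - 1 := by omega
    rw [hsub1, hsub2] at hE
    have hcast : ((j+i+1:ℕ):ℝ) = (j:ℝ) + (i:ℝ) + 1 := by push_cast; ring
    rw [hcast] at hE
    -- numerator lower bound
    have hnum : (nr + 2*((j:ℝ)+(i:ℝ)+1) - 4) * c * Ee nr c j (j+i) - Ee nr c j (j+i-1)
        ≥ (nr + 2*(j:ℝ) + (i:ℝ) - 3) * c * Ee nr c j (j+i) := by
      nlinarith
    have hnum_pos : (0:ℝ) < (nr + 2*(j:ℝ) + (i:ℝ) - 3) * c * Ee nr c j (j+i) := by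
      have : (0:ℝ) < nr + 2*(j:ℝ) + (i:ℝ) - 3 := by nlinarith
      positivity
    have hEpos : 0 < Ee nr c j (j+i+1) := by
      rw [hE]
      apply div_pos _ hDpos
      linarith
    refine ⟨hEpos, ?_⟩
    have hsub3 : j + (i+1) - 1 = j + i := by omega
    have hgoal : Ee nr c j (j+i) ≤ ((i:ℝ)+1+1)*c*Ee nr c j (j+i+1) := by
      have hEmul : Ee nr c j (j+i+1) * (muv nr (j+i+1) - muv nr j)
          = (nr + 2*((j:ℝ)+(i:ℝ)+1) - 4) * c * Ee nr c j (j+i) - Ee nr c j (j+i-1) := by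
        rw [hE]
        field_simp
      -- key inequality
      have hA3 : (0:ℝ) ≤ nr + 2*(j:ℝ)+(i:ℝ) - 3 := by nlinarith
      have hc2 : (1:ℝ) ≤ c^2 := by nlinarith
      have h24 : (0:ℝ) ≤ nr + 2*(j:ℝ) - 4 := by nlinarith
      have hfac : (0:ℝ) ≤ ((i:ℝ)+2) * (nr + 2*(j:ℝ)+(i:ℝ) - 3) := by positivity
      have key : ((i:ℝ)+2) * (nr + 2*(j:ℝ)+(i:ℝ) - 3) * c^2
          ≥ ((i:ℝ)+1) * (nr + 2*(j:ℝ)+(i:ℝ) - 2) := by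
        have e1 : ((i:ℝ)+2) * (nr + 2*(j:ℝ)+(i:ℝ) - 3) - ((i:ℝ)+1) * (nr + 2*(j:ℝ)+(i:ℝ) - 2)
            = nr + 2*(j:ℝ) - 4 := by ring
        nlinarith [mul_le_mul_of_nonneg_left hc2 hfac]
      rw [← sub_nonneg]
      have expand : ((i:ℝ)+1+1)*c*Ee nr c j (j+i+1) - Ee nr c j (j+i)
          = (((i:ℝ)+2)*c*(Ee nr c j (j+i+1) * (muv nr (j+i+1) - muv nr j))
              - Ee nr c j (j+i) * (muv nr (j+i+1) - muv nr j)) / (muv nr (j+i+1) - muv nr j) := by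
        field_simp
        ring
      rw [expand]
      apply div_nonneg _ (le_of_lt hDpos)
      rw [hEmul, hD]
      have hstep1 : ((i:ℝ)+2)*c*((nr + 2*((j:ℝ)+(i:ℝ)+1) - 4) * c * Ee nr c j (j+i)
            - Ee nr c j (j+i-1))
          ≥ ((i:ℝ)+2)*c*((nr + 2*(j:ℝ)+(i:ℝ) - 3) * c * Ee nr c j (j+i)) := by
        apply mul_le_mul_of_nonneg_left hnum (by positivity)
      have hstep2 : ((i:ℝ)+2)*c*((nr + 2*(j:ℝ)+(i:ℝ) - 3) * c * Ee nr c j (j+i))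
          = (((i:ℝ)+2) * (nr + 2*(j:ℝ)+(i:ℝ) - 3) * c^2) * Ee nr c j (j+i) := by ring
      have hstep3 : (((i:ℝ)+2) * (nr + 2*(j:ℝ)+(i:ℝ) - 3) * c^2) * Ee nr c j (j+i)
          ≥ (((i:ℝ)+1) * (nr + 2*(j:ℝ)+(i:ℝ) - 2)) * Ee nr c j (j+i) :=
        mul_le_mul_of_nonneg_right key h1.le
      linarith
    calc Ee nr c j (j+(i+1)-1) = Ee nr c j (j+i) := by rw [hsub3]
      _ ≤ ((i:ℝ)+1+1)*c*Ee nr c j (j+i+1) := hgoal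
      _ = (((i+1:ℕ):ℝ)+1)*c*Ee nr c j (j+(i+1)) := by push_cast; ring_nf

noncomputable def alph (w : ℕ → ℝ) (Ef : ℕ → ℕ → ℝ) : ℕ → ℝ
  | j => w j - ∑ x ∈ (Finset.Ico 1 j).attach, alph w Ef x.1 * Ef x.1 j
  termination_by j => j
  decreasing_by exact (Finset.mem_Ico.mp x.2).2

lemma alph_eq (w : ℕ → ℝ) (Ef : ℕ → ℕ → ℝ) (j : ℕ) :
    alph w Ef j = w j - ∑ x ∈ Finset.Ico 1 j, alph w Ef x * Ef x j := by
  rw [alph, ← Finset.sum_attach (Finset.Ico 1 j) (fun x => alph w Ef x * Ef x j)]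
lemma muv_lt {nr : ℝ} (h2n : 2 ≤ nr) {j k : ℕ} (hj : 1 ≤ j) (hjk : j < k) :
    muv nr j < muv nr k := by
  have hi : k = j + (k - j - 1) + 1 := by omega
  rw [hi, ← sub_pos, muv_diff]
  have hj1 : (1:ℝ) ≤ (j:ℝ) := by exact_mod_cast hj
  have : (0:ℝ) ≤ ((k - j - 1 : ℕ):ℝ) := by positivity
  nlinarith

lemma Ee_key {nr c : ℝ} (h2n : 2 ≤ nr) {j k : ℕ} (hj : 1 ≤ j) (hk : 2 ≤ k) :
    Ee nr c j (k-2) - (nr + 2*(k:ℝ) - 4)*c*Ee nr c j (k-1) + muv nr k * Ee nr c j k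
      = muv nr j * Ee nr c j k := by
  rcases lt_trichotomy k j with h | h | h
  · rw [Ee_lt h, Ee_lt (by omega), Ee_lt (by omega)]
    ring
  · subst h
    rw [Ee_self, Ee_lt (by omega), Ee_lt (by omega)]
    ring
  · have hD : muv nr k - muv nr j ≠ 0 := ne_of_gt (by linarith [muv_lt h2n hj h])
    rw [Ee_gt h]
    field_simp
    ring

lemma moments : ∀ (t : ℕ) (s : Finset ℕ) (x β : ℕ → ℝ), s.card = t →
    (∀ j ∈ s, ∀ j' ∈ s, j ≠ j' → x j ≠ x j') →
    (∀ l, l < t → ∑ j ∈ s, β j * x j ^ l = 0) → ∀ j ∈ s, β j = 0 := by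
  intro t
  induction t with
  | zero =>
    intro s x β hcard _ _ j hj
    rw [Finset.card_eq_zero] at hcard
    subst hcard
    exact absurd hj (Finset.notMem_empty j)
  | succ t ih =>
    intro s x β hcard hdist hmom
    have hne : s.Nonempty := by
      rw [← Finset.card_pos, hcard]; omega
    obtain ⟨p, hp⟩ := hne
    have hcard' : (s.erase p).card = t := by
      rw [Finset.card_erase_of_mem hp, hcard]
      omega
    have hm' : ∀ l, l < t → ∑ j ∈ s.erase p, (β j * (x j - x p)) * x j ^ l = 0 := by
      intro l hl
      have e0 : (fun j => (β j * (x j - x p)) * x j ^ l) p = 0 := by simp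
      rw [Finset.sum_erase s e0]
      have e1 : ∀ j ∈ s, (β j * (x j - x p)) * x j ^ l
          = β j * x j ^ (l+1) - x p * (β j * x j ^ l) := by
        intro j _; ring
      rw [Finset.sum_congr rfl e1, Finset.sum_sub_distrib, ← Finset.mul_sum,
        hmom (l+1) (by omega), hmom l (by omega)]
      ring
    have hdist' : ∀ j ∈ s.erase p, ∀ j' ∈ s.erase p, j ≠ j' → x j ≠ x j' := by
      intro j hj j' hj' hne'
      exact hdist j (Finset.mem_of_mem_erase hj) j' (Finset.mem_of_mem_erase hj') hne'
    have hz' := ih (s.erase p) x (fun j => β j * (x j - x p)) hcard' hdist' hm'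
    have hβ' : ∀ j ∈ s.erase p, β j = 0 := by
      intro j hj
      have h0 := hz' j hj
      rcases mul_eq_zero.mp h0 with h | h
      · exact h
      · exfalso
        have hxne : x j ≠ x p :=
          hdist j (Finset.mem_of_mem_erase hj) p hp (Finset.ne_of_mem_erase hj)
        exact hxne (by linarith [sub_eq_zero.mp h])
    have hβp : β p = 0 := by
      have h0 := hmom 0 (by omega)
      rw [← Finset.add_sum_erase s _ hp] at h0
      have e2 : ∑ j ∈ s.erase p, β j * x j ^ 0 = 0 :=
        Finset.sum_eq_zero fun j hj => by rw [hβ' j hj]; ring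
      rw [e2] at h0
      simpa using h0
    intro j hj
    by_cases hjp : j = p
    · rw [hjp]; exact hβp
    · exact hβ' j (Finset.mem_erase.mpr ⟨hjp, hj⟩)

lemma grid (nr c : ℝ) (h2n : 2 ≤ nr) (hcg : 1 < c) (m : ℕ) (hm : 1 ≤ m) (v : ℕ → ℕ → ℝ)
    (ha : ∀ l, v 0 l = 0)
    (hb : ∀ l, v 1 (l+1) = 0)
    (hrec : ∀ k l, 2 ≤ k → k ≤ m →
      v k (l+1) = v (k-2) l - (nr + 2*(k:ℝ) - 4)*c*v (k-1) l + muv nr k * v k l)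
    (hd : ∀ l, l < m → v m l = 0) :
    ∀ k, k ≤ m → v k 0 = 0 := by
  set Ef : ℕ → ℕ → ℝ := Ee nr c with hEf
  set w : ℕ → ℝ := fun k => v k 0 with hw
  set α : ℕ → ℝ := alph w Ef with hα
  -- base decomposition
  have hdec0 : ∀ k, 1 ≤ k → k ≤ m → v k 0 = ∑ j ∈ Finset.Icc 1 m, α j * Ef j k := by
    intro k hk1 hkm
    have hsplit : Finset.Icc 1 m = Finset.Icc 1 k ∪ Finset.Ioc k m := by
      ext a
      simp only [Finset.mem_Icc, Finset.mem_union, Finset.mem_Ioc]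
      omega
    have hdisj : Disjoint (Finset.Icc 1 k) (Finset.Ioc k m) := by
      rw [Finset.disjoint_left]
      intro a ha1 ha2
      simp only [Finset.mem_Icc] at ha1
      simp only [Finset.mem_Ioc] at ha2
      omega
    rw [hsplit, Finset.sum_union hdisj]
    have hIoc : ∑ j ∈ Finset.Ioc k m, α j * Ef j k = 0 := by
      apply Finset.sum_eq_zero
      intro j hj
      simp only [Finset.mem_Ioc] at hj
      rw [hEf, Ee_lt hj.1]
      ring
    rw [hIoc, add_zero]
    have hIcc : Finset.Icc 1 k = Finset.Ico 1 (k+1) := by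
      ext a; simp only [Finset.mem_Icc, Finset.mem_Ico]; omega
    rw [hIcc, Finset.sum_Ico_succ_top hk1]
    have hdiag : Ef k k = 1 := Ee_self
    have hIco : Finset.Ico 1 k = Finset.Ico 1 k := rfl
    have := alph_eq w Ef k
    rw [hdiag, mul_one]
    have : α k = w k - ∑ x ∈ Finset.Ico 1 k, α x * Ef x k := alph_eq w Ef k
    rw [this]
    show v k 0 = ∑ x ∈ Finset.Ico 1 k, α x * Ef x k + (w k - ∑ x ∈ Finset.Ico 1 k, α x * Ef x k)
    rw [hw]
    ring
  -- full decomposition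
  have hdec : ∀ l k, k ≤ m → v k l = ∑ j ∈ Finset.Icc 1 m, α j * muv nr j ^ l * Ef j k := by
    intro l
    induction l with
    | zero =>
      intro k hkm
      rcases Nat.eq_zero_or_pos k with hk0 | hk1
      · subst hk0
        rw [ha 0]
        symm
        apply Finset.sum_eq_zero
        intro j hj
        simp only [Finset.mem_Icc] at hj
        rw [hEf, Ee_lt (by omega : 0 < j)]
        ring
      · rw [hdec0 k hk1 hkm]
        apply Finset.sum_congr rfl
        intro j _
        rw [pow_zero]
        ring
    | succ l ih =>
      intro k hkm
      rcases Nat.eq_zero_or_pos k with hk0 | hk1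
      · subst hk0
        rw [ha (l+1)]
        symm
        apply Finset.sum_eq_zero
        intro j hj
        simp only [Finset.mem_Icc] at hj
        rw [hEf, Ee_lt (by omega : 0 < j)]
        ring
      · rcases Nat.lt_or_ge k 2 with hk2 | hk2
        · -- k = 1
          have hk1' : k = 1 := by omega
          subst hk1'
          rw [hb l]
          symm
          apply Finset.sum_eq_zero
          intro j hj
          simp only [Finset.mem_Icc] at hj
          rcases Nat.lt_or_ge 1 j with hj2 | hj2
          · rw [hEf, Ee_lt hj2]; ring
          · have hj1 : j = 1 := by omega
            subst hj1
            have : muv nr 1 = 0 := by unfold muv; norm_num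
            rw [this, zero_pow (by omega : l + 1 ≠ 0)]
            ring
        · -- k ≥ 2
          rw [hrec k l hk2 hkm, ih (k-2) (by omega), ih (k-1) (by omega), ih k hkm]
          rw [Finset.mul_sum, Finset.mul_sum, ← Finset.sum_sub_distrib, ← Finset.sum_add_distrib]
          apply Finset.sum_congr rfl
          intro j hj
          simp only [Finset.mem_Icc] at hj
          have hkey := Ee_key (c := c) h2n hj.1 hk2 (k := k)
          rw [hEf]
          calc α j * muv nr j ^ l * Ee nr c j (k-2)
                - (nr + 2*(k:ℝ) - 4)*c*(α j * muv nr j ^ l * Ee nr c j (k-1))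
                + muv nr k * (α j * muv nr j ^ l * Ee nr c j k)
              = α j * muv nr j ^ l * (Ee nr c j (k-2) - (nr + 2*(k:ℝ) - 4)*c*Ee nr c j (k-1)
                  + muv nr k * Ee nr c j k) := by ring
            _ = α j * muv nr j ^ l * (muv nr j * Ee nr c j k) := by rw [hkey]
            _ = α j * muv nr j ^ (l+1) * Ee nr c j k := by rw [pow_succ]; ring
  -- moments
  have hEposm : ∀ j, 1 ≤ j → j ≤ m → 0 < Ef j m := by
    intro j hj1 hjm
    have := (Ee_pos h2n hcg hj1 (m - j)).1
    rwa [show j + (m - j) = m by omega] at this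
  have hmom : ∀ l, l < m → ∑ j ∈ Finset.Icc 1 m, (α j * Ef j m) * muv nr j ^ l = 0 := by
    intro l hl
    have h1 := hdec l m le_rfl
    rw [hd l hl] at h1
    have h2 : ∑ j ∈ Finset.Icc 1 m, (α j * Ef j m) * muv nr j ^ l
        = ∑ j ∈ Finset.Icc 1 m, α j * muv nr j ^ l * Ef j m :=
      Finset.sum_congr rfl fun j _ => by ring
    rw [h2, ← h1]
  have hdistinct : ∀ j ∈ Finset.Icc 1 m, ∀ j' ∈ Finset.Icc 1 m, j ≠ j'
      → muv nr j ≠ muv nr j' := by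
    intro j hj j' hj' hne
    simp only [Finset.mem_Icc] at hj hj'
    rcases Nat.lt_or_ge j j' with h | h
    · exact ne_of_lt (muv_lt h2n hj.1 h)
    · have : j' < j := by omega
      exact (ne_of_lt (muv_lt h2n hj'.1 this)).symm
  have hcard : (Finset.Icc 1 m).card = m := by
    rw [Nat.card_Icc]; omega
  have hαE := moments m (Finset.Icc 1 m) (muv nr) (fun j => α j * Ef j m) hcard hdistinct hmom
  have hαz : ∀ j ∈ Finset.Icc 1 m, α j = 0 := by
    intro j hj
    have h0 := hαE j hj
    simp only [Finset.mem_Icc] at hj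
    rcases mul_eq_zero.mp h0 with h | h
    · exact h
    · exact absurd h (ne_of_gt (hEposm j hj.1 hj.2))
  intro k hkm
  rcases Nat.eq_zero_or_pos k with hk0 | hk1
  · subst hk0; exact ha 0
  · rw [hdec0 k hk1 hkm]
    apply Finset.sum_eq_zero
    intro j hj
    rw [hαz j hj]
    ring
open scoped ContDiff

lemma cdN_deriv {f : ℝ → ℝ} {x : ℝ} (N : ℕ) (h : ContDiffAt ℝ ((N+1 : ℕ) : WithTop ℕ∞) f x) :
    ContDiffAt ℝ (N : WithTop ℕ∞) (deriv f) x := by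
  have h' := h.fderiv_right (m := (N : WithTop ℕ∞)) (by push_cast; exact le_rfl)
  show ContDiffAt ℝ N (fun y => fderiv ℝ f y 1) x
  exact h'.clm_apply contDiffAt_const

lemma cd_deriv {f : ℝ → ℝ} {x : ℝ} (h : ContDiffAt ℝ ∞ f x) : ContDiffAt ℝ ∞ (deriv f) x :=
  contDiffAt_infty.mpr fun N => cdN_deriv N (contDiffAt_infty.mp h (N+1))

lemma dAt {f : ℝ → ℝ} {x : ℝ} (h : ContDiffAt ℝ ∞ f x) : DifferentiableAt ℝ f x :=
  h.differentiableAt (by simp)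

lemma cdN_Gop {n : ℤ} {f : ℝ → ℝ} {x : ℝ} (N : ℕ) (h : ContDiffAt ℝ ((N+1 : ℕ) : WithTop ℕ∞) f x)
    (hx : Real.sinh x ≠ 0) (k : ℤ) : ContDiffAt ℝ (N : WithTop ℕ∞) (Gop n k f) x := by
  show ContDiffAt ℝ N (fun s => deriv f s + ((n:ℝ)+(k:ℝ)-2) * (Real.cosh s / Real.sinh s) * f s) x
  exact (cdN_deriv N h).add ((contDiffAt_const.mul
    (Real.contDiff_cosh.contDiffAt.div Real.contDiff_sinh.contDiffAt hx)).mul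
    (h.of_le (Nat.cast_le.mpr (Nat.le_succ N))))

lemma cd_Gop {n : ℤ} {f : ℝ → ℝ} {x : ℝ} (h : ContDiffAt ℝ ∞ f x) (hx : Real.sinh x ≠ 0) (k : ℤ) :
    ContDiffAt ℝ ∞ (Gop n k f) x :=
  contDiffAt_infty.mpr fun N => cdN_Gop N (contDiffAt_infty.mp h (N+1)) hx k

lemma cd_Dop {n : ℤ} {f : ℝ → ℝ} {x : ℝ} (h : ContDiffAt ℝ ∞ f x) (hx : Real.sinh x ≠ 0) (k : ℤ) :
    ContDiffAt ℝ ∞ (Dop n k f) x := by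
  have hd := cd_deriv h
  have hdd := cd_deriv hd
  show ContDiffAt ℝ ∞ (fun s => deriv (deriv f) s + ((n : ℝ) - 1) * (Real.cosh s / Real.sinh s) * deriv f s
    - ((k : ℝ) * ((k : ℝ) + (n : ℝ) - 2) / (Real.sinh s) ^ 2) * f s) x
  exact (hdd.add ((contDiffAt_const.mul
    (Real.contDiff_cosh.contDiffAt.div Real.contDiff_sinh.contDiffAt hx)).mul hd)).sub
    ((contDiffAt_const.div (Real.contDiff_sinh.contDiffAt.pow 2) (pow_ne_zero 2 hx)).mul h)

lemma cd_goc {n : ℤ} {s : ℝ} (hs : Real.sinh s ≠ 0) :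
    ∀ (d a : ℕ) (g : ℝ → ℝ), ContDiffAt ℝ ∞ g s → ContDiffAt ℝ ∞ (goc n d a g) s := by
  intro d
  induction d with
  | zero => intro a g hg; exact hg
  | succ d ih => intro a g hg; exact cd_Gop (ih (a+1) g hg) hs _

lemma deriv_Gop_at' {n : ℤ} {f : ℝ → ℝ} {s : ℝ} (hs : Real.sinh s ≠ 0)
    (hd1 : DifferentiableAt ℝ (deriv f) s) (hdf : DifferentiableAt ℝ f s) (k : ℤ) :
    deriv (Gop n k f) s = deriv (deriv f) s
      + ((n:ℝ)+(k:ℝ)-2) * ((1 - cth s^2) * f s + cth s * deriv f s) := by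
  have hdc : DifferentiableAt ℝ cth s := (analyticAt_cth hs).differentiableAt
  have e1 : Gop n k f = fun x => deriv f x + (((n:ℝ)+(k:ℝ)-2) * cth x) * f x := rfl
  rw [e1, deriv_fun_add hd1 (show DifferentiableAt ℝ (fun y => ((n:ℝ)+(k:ℝ)-2) * cth y * f y) s from (hdc.const_mul _).mul hdf), deriv_fun_mul (hdc.const_mul _) hdf,
    deriv_const_mul _ hdc, deriv_cth_at hs]
  ring

lemma deriv_Lop_at' {f : ℝ → ℝ} {s : ℝ} (hs : Real.sinh s ≠ 0)
    (hd1 : DifferentiableAt ℝ (deriv f) s) (hdf : DifferentiableAt ℝ f s) (k : ℤ) :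
    deriv (Lop k f) s = deriv (deriv f) s
      + (1-(k:ℝ)) * ((1 - cth s^2) * f s + cth s * deriv f s) := by
  have hdc : DifferentiableAt ℝ cth s := (analyticAt_cth hs).differentiableAt
  have e1 : Lop k f = fun x => deriv f x + ((1-(k:ℝ)) * cth x) * f x := rfl
  rw [e1, deriv_fun_add hd1 (show DifferentiableAt ℝ (fun y => (1-(k:ℝ)) * cth y * f y) s from (hdc.const_mul _).mul hdf), deriv_fun_mul (hdc.const_mul _) hdf,
    deriv_const_mul _ hdc, deriv_cth_at hs]
  ring

lemma fact_A2c {n : ℤ} {f : ℝ → ℝ} {s : ℝ} (hs : Real.sinh s ≠ 0)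
    (hd1 : DifferentiableAt ℝ (deriv f) s) (hdf : DifferentiableAt ℝ f s) (k : ℤ) :
    Dop n k f s = Lop k (Gop n k f) s + muz n k * f s := by
  have h2 : (k:ℝ) * ((k:ℝ)+(n:ℝ)-2) / Real.sinh s ^ 2
      = (k:ℝ) * ((k:ℝ)+(n:ℝ)-2) * (cth s ^ 2 - 1) := by
    rw [cth_sq_sub_one hs]; ring
  show deriv (deriv f) s + ((n : ℝ) - 1) * (Real.cosh s / Real.sinh s) * deriv f s
      - ((k : ℝ) * ((k : ℝ) + (n : ℝ) - 2) / (Real.sinh s) ^ 2) * f s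
    = (deriv (Gop n k f) s + (1 - (k:ℝ)) * cth s * (Gop n k f) s) + muz n k * f s
  rw [h2, deriv_Gop_at' hs hd1 hdf k]
  show _ = _ + (1 - (k:ℝ)) * cth s *
    (deriv f s + ((n : ℝ) + (k : ℝ) - 2) * (Real.cosh s / Real.sinh s) * f s) + muz n k * f s
  have hcth : Real.cosh s / Real.sinh s = cth s := rfl
  rw [hcth]
  unfold muz
  ring

lemma fact_A2c' {n : ℤ} {f : ℝ → ℝ} {s : ℝ} (hs : Real.sinh s ≠ 0)
    (hd1 : DifferentiableAt ℝ (deriv f) s) (hdf : DifferentiableAt ℝ f s) (k : ℤ) :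
    Dop n (k-1) f s = Gop n k (Lop k f) s + muz n k * f s := by
  have h2 : ((k-1:ℤ):ℝ) * (((k-1:ℤ)) + (n:ℝ)-2) / Real.sinh s ^ 2
      = ((k:ℝ)-1) * ((k:ℝ)+(n:ℝ)-3) * (cth s ^ 2 - 1) := by
    rw [cth_sq_sub_one hs]; push_cast; ring
  show deriv (deriv f) s + ((n : ℝ) - 1) * (Real.cosh s / Real.sinh s) * deriv f s
      - (((k-1:ℤ) : ℝ) * (((k-1:ℤ) : ℝ) + (n : ℝ) - 2) / (Real.sinh s) ^ 2) * f s
    = (deriv (Lop k f) s + ((n:ℝ) + (k:ℝ) - 2) * (Real.cosh s / Real.sinh s) * (Lop k f) s)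
      + muz n k * f s
  have h3 : (((k-1:ℤ) : ℝ) * (((k-1:ℤ) : ℝ) + (n : ℝ) - 2) / (Real.sinh s) ^ 2)
      = ((k:ℝ)-1) * ((k:ℝ)+(n:ℝ)-3) * (cth s ^ 2 - 1) := by push_cast at h2 ⊢; exact h2
  rw [h3, deriv_Lop_at' hs hd1 hdf k]
  show _ = _ + ((n:ℝ) + (k:ℝ) - 2) * (Real.cosh s / Real.sinh s) *
    (deriv f s + (1 - (k:ℝ)) * cth s * f s) + muz n k * f s
  have hcth : Real.cosh s / Real.sinh s = cth s := rfl
  rw [hcth]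
  unfold muz
  ring

lemma Gop_congr_ev {n : ℤ} {f g : ℝ → ℝ} {s : ℝ} (h : f =ᶠ[𝓝 s] g) (k : ℤ) :
    Gop n k f =ᶠ[𝓝 s] Gop n k g := by
  filter_upwards [h.deriv, h] with x h1 h2
  show deriv f x + _ * _ * f x = deriv g x + _ * _ * g x
  rw [h1, h2]

lemma fact_A3c {n : ℤ} {f : ℝ → ℝ} {y : ℝ} (hy : Real.sinh y ≠ 0)
    (hev : ∀ᶠ z in 𝓝 y, DifferentiableAt ℝ f z ∧ DifferentiableAt ℝ (deriv f) z ∧ Real.sinh z ≠ 0)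
    (hdf : DifferentiableAt ℝ f y) (k : ℤ) (hG1 : DifferentiableAt ℝ (Gop n k f) y)
    (hG2 : DifferentiableAt ℝ (deriv (Gop n k f)) y) :
    Gop n k (Dop n k f) y = Dop n (k-1) (Gop n k f) y := by
  have h2 : Dop n k f =ᶠ[𝓝 y] fun x => Lop k (Gop n k f) x + muz n k * f x :=
    hev.mono fun z hz => fact_A2c hz.2.2 hz.2.1 hz.1 k
  have step1 : Gop n k (Dop n k f) y
      = Gop n k (fun x => Lop k (Gop n k f) x + muz n k * f x) y :=
    (Gop_congr_ev h2 k).eq_of_nhds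
  have hdL : DifferentiableAt ℝ (Lop k (Gop n k f)) y := by
    have e1 : Lop k (Gop n k f) = fun x => deriv (Gop n k f) x
        + ((1-(k:ℝ)) * cth x) * (Gop n k f) x := rfl
    rw [e1]
    exact hG2.add (((analyticAt_cth hy).differentiableAt.const_mul _).mul hG1)
  have step2 : Gop n k (fun x => Lop k (Gop n k f) x + muz n k * f x) y
      = Gop n k (Lop k (Gop n k f)) y + muz n k * Gop n k f y := by
    show deriv (fun x => Lop k (Gop n k f) x + muz n k * f x) y + _
      = (deriv (Lop k (Gop n k f)) y + _) + _
    rw [deriv_fun_add hdL (hdf.const_mul _), deriv_const_mul _ hdf]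
    show _ + _ * _ * (Lop k (Gop n k f) y + muz n k * f y) = _
    unfold Gop
    ring
  rw [step1, step2, fact_A2c' hy hG2 hG1 k]

lemma fA3e {n : ℤ} {f : ℝ → ℝ} {s : ℝ} (h : ContDiffAt ℝ ∞ f s) (hs : Real.sinh s ≠ 0) (k : ℤ) :
    Gop n k (Dop n k f) =ᶠ[𝓝 s] Dop n (k-1) (Gop n k f) := by
  have hs' : ∀ᶠ z in 𝓝 s, Real.sinh z ≠ 0 := Real.continuous_sinh.continuousAt.eventually_ne hs
  have h3 : ∀ᶠ z in 𝓝 s, ContDiffAt ℝ ((2+1:ℕ) : WithTop ℕ∞) f z :=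
    (contDiffAt_infty.mp h (2+1)).eventually (by simp)
  filter_upwards [(hs'.and h3).eventually_nhds] with y hy
  obtain ⟨hsy, h3y⟩ := hy.self_of_nhds
  have hd : ∀ z, ContDiffAt ℝ ((2+1:ℕ) : WithTop ℕ∞) f z →
      DifferentiableAt ℝ f z ∧ DifferentiableAt ℝ (deriv f) z :=
    fun z hz => ⟨hz.differentiableAt (by norm_num), (cdN_deriv 2 hz).differentiableAt (by norm_num)⟩
  have hG := cdN_Gop (n := n) 2 h3y hsy k
  exact fact_A3c hsy (hy.mono fun z hz => ⟨(hd z hz.2).1, (hd z hz.2).2, hz.1⟩) (hd y h3y).1 k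
    (hG.differentiableAt (by norm_num)) ((cdN_deriv 1 hG).differentiableAt (by norm_num))

lemma fITe {n : ℤ} {s : ℝ} (hs : Real.sinh s ≠ 0) :
    ∀ (d a : ℕ) (g : ℝ → ℝ), ContDiffAt ℝ ∞ g s →
      goc n d a (Dop n ((a:ℤ)+(d:ℤ)) g) =ᶠ[𝓝 s] Dop n a (goc n d a g) := by
  intro d
  induction d with
  | zero =>
    intro a g hg
    show Dop n ((a:ℤ)+((0:ℕ):ℤ)) g =ᶠ[𝓝 s] Dop n a g
    simp only [Nat.cast_zero, add_zero]
    exact Filter.EventuallyEq.rfl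
  | succ d ih =>
    intro a g hg
    have ih' := ih (a+1) g hg
    have hc : ((a+1:ℕ):ℤ) = (a:ℤ)+1 := by push_cast; ring
    have hc2 : (a:ℤ)+1-1 = a := by ring
    rw [hc] at ih'
    have e1 : goc n (d+1) a (Dop n ((a:ℤ)+((d+1:ℕ):ℤ)) g)
        = Gop n ((a:ℤ)+1) (goc n d (a+1) (Dop n ((a:ℤ)+1+(d:ℤ)) g)) := by
      show Gop n ((a:ℤ)+1) (goc n d (a+1) (Dop n ((a:ℤ)+((d+1:ℕ):ℤ)) g)) = _
      rw [show (a:ℤ)+((d+1:ℕ):ℤ) = (a:ℤ)+1+(d:ℤ) by push_cast; ring]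
    have e3 := fA3e (n := n) (cd_goc (n := n) hs d (a+1) g hg) hs ((a:ℤ)+1)
    rw [hc2] at e3
    rw [e1]
    exact (Gop_congr_ev ih' _).trans e3

lemma flat_mul {a f : ℝ → ℝ} {x : ℝ} {j : ℕ} (ha : ContDiffAt ℝ ∞ a x) (hf : ContDiffAt ℝ ∞ f x)
    (hfl : ∀ i ≤ j, iteratedDeriv i f x = 0) : iteratedDeriv j (fun s => a s * f s) x = 0 := by
  rw [iteratedDeriv_fun_mul (contDiffAt_infty.mp ha j) (contDiffAt_infty.mp hf j)]
  apply Finset.sum_eq_zero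
  intro i hi
  rw [hfl (j-i) (by omega)]
  ring

lemma flat_Dop {n : ℤ} {f : ℝ → ℝ} {x : ℝ} (hf : ContDiffAt ℝ ∞ f x) (hx : Real.sinh x ≠ 0)
    (hfl : ∀ j, iteratedDeriv j f x = 0) (k : ℤ) : ∀ j, iteratedDeriv j (Dop n k f) x = 0 := by
  intro j
  have hd := cd_deriv hf
  have hdd := cd_deriv hd
  have hc1 : ContDiffAt ℝ ∞ (fun s => ((n:ℝ)-1) * (Real.cosh s / Real.sinh s)) x :=
    contDiffAt_const.mul (Real.contDiff_cosh.contDiffAt.div Real.contDiff_sinh.contDiffAt hx)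
  have hc2 : ContDiffAt ℝ ∞ (fun s => ((k:ℝ)*((k:ℝ)+(n:ℝ)-2) / Real.sinh s ^ 2)) x :=
    contDiffAt_const.div (Real.contDiff_sinh.contDiffAt.pow 2) (pow_ne_zero 2 hx)
  have hA : ContDiffAt ℝ ∞ (fun s => deriv (deriv f) s
      + ((n:ℝ)-1) * (Real.cosh s / Real.sinh s) * deriv f s) x := hdd.add (hc1.mul hd)
  have hB : ContDiffAt ℝ ∞ (fun s => ((k:ℝ)*((k:ℝ)+(n:ℝ)-2) / Real.sinh s ^ 2) * f s) x :=
    hc2.mul hf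
  have t1 : iteratedDeriv j (fun s => ((n:ℝ)-1) * (Real.cosh s / Real.sinh s) * deriv f s) x = 0 :=
    flat_mul hc1 hd (fun i _ => by rw [← iteratedDeriv_succ']; exact hfl _)
  have t2 : iteratedDeriv j (fun s => ((k:ℝ)*((k:ℝ)+(n:ℝ)-2) / Real.sinh s ^ 2) * f s) x = 0 :=
    flat_mul hc2 hf (fun i _ => hfl i)
  have t3 : iteratedDeriv j (deriv (deriv f)) x = 0 := by
    rw [← iteratedDeriv_succ', ← iteratedDeriv_succ']; exact hfl _
  show iteratedDeriv j (fun s => (deriv (deriv f) s + ((n:ℝ)-1) * (Real.cosh s / Real.sinh s)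
    * deriv f s) - ((k:ℝ)*((k:ℝ)+(n:ℝ)-2) / Real.sinh s ^ 2) * f s) x = 0
  rw [iteratedDeriv_fun_sub (contDiffAt_infty.mp hA j) (contDiffAt_infty.mp hB j),
    iteratedDeriv_fun_add (contDiffAt_infty.mp hdd j) (contDiffAt_infty.mp (hc1.mul hd) j),
    t1, t2, t3]
  ring

lemma peel_flat {n : ℤ} {g : ℝ → ℝ} {x : ℝ} (hg : ContDiffAt ℝ ∞ g x) (hx : Real.sinh x ≠ 0)
    (k : ℤ) (hG : ∀ j, iteratedDeriv j (Gop n k g) x = 0) (h0 : g x = 0) :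
    ∀ j, iteratedDeriv j g x = 0 := by
  have hd := cd_deriv hg
  have hc : ContDiffAt ℝ ∞ (fun s => ((n:ℝ)+(k:ℝ)-2) * (Real.cosh s / Real.sinh s)) x :=
    contDiffAt_const.mul (Real.contDiff_cosh.contDiffAt.div Real.contDiff_sinh.contDiffAt hx)
  have key : ∀ j, ∀ i ≤ j, iteratedDeriv i g x = 0 := by
    intro j
    induction j with
    | zero => intro i hi; rw [Nat.le_zero.mp hi, iteratedDeriv_zero]; exact h0
    | succ j ih =>
      intro i hi
      rcases Nat.lt_or_ge j i with hji | hji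
      · have hi' : i = j+1 := by omega
        subst hi'
        have e := hG j
        change iteratedDeriv j (fun s => deriv g s
          + ((n:ℝ)+(k:ℝ)-2) * (Real.cosh s / Real.sinh s) * g s) x = 0 at e
        rw [iteratedDeriv_fun_add (contDiffAt_infty.mp hd j) (contDiffAt_infty.mp (hc.mul hg) j),
          ← iteratedDeriv_succ', flat_mul hc hg ih, add_zero] at e
        exact e
      · exact ih i hji
  exact fun j => key j j le_rfl

theorem stmt_9 (n : ℤ) (hn : 2 ≤ n) (m : ℕ) (hm : 1 ≤ m) (R : ℝ) (hR : 0 < R)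
    (F : ℝ → ℝ) (hF : ContDiffAt ℝ (⊤ : ℕ∞) F R)
    (h1 : ∀ l : ℕ, iteratedDeriv l (Qop n m F) R = 0)
    (h2 : ∀ l : ℕ, l < m → (Dop n (m : ℤ))^[l] F R = 0) :
    ∀ k : ℕ, iteratedDeriv k F R = 0 := by
  classical
  have hRs : Real.sinh R ≠ 0 := ne_of_gt (Real.sinh_pos_iff.mpr hR)
  have hFc : ContDiffAt ℝ ∞ F R := hF
  -- the ladder
  set Gl : ℕ → ℝ → ℝ := fun l => (Dop n (m:ℤ))^[l] F with hGl
  set U : ℕ → ℕ → ℝ → ℝ := fun k l => goc n (m-k) k (Gl l) with hU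
  have hCGl : ∀ l, ContDiffAt ℝ ∞ (Gl l) R := by
    intro l
    induction l with
    | zero => exact hFc
    | succ l ih =>
      have he : Gl (l+1) = Dop n (m:ℤ) (Gl l) := Function.iterate_succ_apply' _ _ _
      rw [he]
      exact cd_Dop ih hRs _
  have hCU : ∀ k l, ContDiffAt ℝ ∞ (U k l) R := fun k l => cd_goc hRs _ _ _ (hCGl l)
  have hUrel : ∀ k l, 1 ≤ k → k ≤ m → U (k-1) l = Gop n (k:ℤ) (U k l) := by
    intro k l hk1 hkm
    show goc n (m-(k-1)) (k-1) (Gl l) = _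
    rw [show m-(k-1) = (m-k)+1 by omega]
    show Gop n (((k-1:ℕ):ℤ)+1) (goc n (m-k) ((k-1)+1) (Gl l)) = _
    rw [show (k-1)+1 = k by omega, show (((k-1:ℕ):ℤ)+1) = (k:ℤ) by omega]
  have hUD : ∀ k l, k ≤ m → U k (l+1) =ᶠ[𝓝 R] Dop n (k:ℤ) (U k l) := by
    intro k l hkm
    have hIT := fITe (n := n) hRs (m-k) k (Gl l) (hCGl l)
    rw [show ((k:ℤ)+((m-k:ℕ):ℤ)) = (m:ℤ) by omega] at hIT
    show goc n (m-k) k (Gl (l+1)) =ᶠ[𝓝 R] _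
    rw [show Gl (l+1) = Dop n (m:ℤ) (Gl l) from Function.iterate_succ_apply' _ _ _]
    exact hIT
  -- column 0 vanishes to infinite order at R
  have hZ0 : ∀ l j, iteratedDeriv j (U 0 l) R = 0 := by
    intro l
    induction l with
    | zero =>
      have hq : Qop n m F = U 0 0 := qop_eq_goc n m F
      intro j
      rw [← hq]
      exact h1 j
    | succ l ih =>
      intro j
      rw [(hUD 0 l (by omega)).iteratedDeriv_eq j]
      exact flat_Dop (hCU 0 l) hRs ih _ j
  have hd0R : ∀ l, deriv (U 0 l) R = 0 := by
    intro l
    have := hZ0 l 1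
    rw [iteratedDeriv_one] at this
    exact this
  -- values
  set v : ℕ → ℕ → ℝ := fun k l => U k l R with hv
  have hcthR : 1 < cth R := by
    have hs : 0 < Real.sinh R := Real.sinh_pos_iff.mpr hR
    have hcs : Real.sinh R < Real.cosh R := by
      have := Real.cosh_sub_sinh R
      nlinarith [Real.exp_pos (-R)]
    rw [cth, lt_div_iff₀ hs]
    linarith
  have ha : ∀ l, v 0 l = 0 := by
    intro l
    have := hZ0 l 0
    rw [iteratedDeriv_zero] at this
    exact this
  have hb : ∀ l, v 1 (l+1) = 0 := by
    intro l
    have e1 : v 1 (l+1) = Dop n ((1:ℕ):ℤ) (U 1 l) R := (hUD 1 l hm).eq_of_nhds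
    have e2 : Dop n ((1:ℕ):ℤ) (U 1 l) R
        = Lop ((1:ℕ):ℤ) (Gop n ((1:ℕ):ℤ) (U 1 l)) R + muz n ((1:ℕ):ℤ) * U 1 l R :=
      fact_A2c hRs (dAt (cd_deriv (hCU 1 l))) (dAt (hCU 1 l)) _
    have e3 : Gop n ((1:ℕ):ℤ) (U 1 l) = U 0 l := (hUrel 1 l le_rfl hm).symm
    have e4 : muz n ((1:ℕ):ℤ) = 0 := by simp [muz]
    rw [e1, e2, e3, e4]
    show deriv (U 0 l) R + (1 - (((1:ℕ):ℤ):ℝ)) * cth R * U 0 l R + 0 * U 1 l R = 0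
    rw [hd0R l]
    norm_num
  have hrec : ∀ k l, 2 ≤ k → k ≤ m →
      v k (l+1) = v (k-2) l - ((n:ℝ) + 2*(k:ℝ) - 4)*(cth R)*v (k-1) l
        + muv (n:ℝ) k * v k l := by
    intro k l hk2 hkm
    have e1 : v k (l+1) = Dop n (k:ℤ) (U k l) R := (hUD k l hkm).eq_of_nhds
    have e2 : Dop n (k:ℤ) (U k l) R
        = Lop (k:ℤ) (Gop n (k:ℤ) (U k l)) R + muz n (k:ℤ) * U k l R :=
      fact_A2c hRs (dAt (cd_deriv (hCU k l))) (dAt (hCU k l)) _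
    have e3 : Gop n (k:ℤ) (U k l) = U (k-1) l := (hUrel k l (by omega) hkm).symm
    have eA : v k (l+1) = deriv (U (k-1) l) R + (1 - (k:ℝ)) * cth R * v (k-1) l
        + muz n (k:ℤ) * v k l := by
      rw [e1, e2, e3]
      show deriv (U (k-1) l) R + (1 - ((k:ℤ):ℝ)) * cth R * U (k-1) l R + _ = _
      push_cast
      ring
    have e4 : U (k-2) l = Gop n (((k-1:ℕ)):ℤ) (U (k-1) l) := by
      have := hUrel (k-1) l (by omega) (by omega)
      rwa [show (k-1)-1 = k-2 by omega] at this
    have eB : v (k-2) l = deriv (U (k-1) l) R + ((n:ℝ) + (k:ℝ) - 3) * cth R * v (k-1) l := by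
      have hcast : (((k-1:ℕ):ℤ):ℝ) = (k:ℝ) - 1 := by
        push_cast [Nat.cast_sub (show 1 ≤ k by omega)]
        ring
      show U (k-2) l R = _
      rw [e4]
      show deriv (U (k-1) l) R
          + ((n:ℝ) + (((k-1:ℕ):ℤ):ℝ) - 2) * (Real.cosh R / Real.sinh R) * U (k-1) l R = _
      rw [hcast, show (Real.cosh R / Real.sinh R) = cth R from rfl]
      show _ = deriv (U (k-1) l) R + ((n:ℝ) + (k:ℝ) - 3) * cth R * U (k-1) l R
      ring
    have emu : muz n (k:ℤ) = muv (n:ℝ) k := by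
      unfold muz muv
      push_cast
      ring
    rw [emu] at eA
    rw [eA, eB]
    ring
  have hdm : ∀ l, l < m → v m l = 0 := by
    intro l hl
    have : U m l = Gl l := by
      show goc n (m-m) m (Gl l) = Gl l
      rw [Nat.sub_self]
      rfl
    rw [hv]
    show U m l R = 0
    rw [this]
    exact h2 l hl
  have h2n : (2:ℝ) ≤ (n:ℝ) := by exact_mod_cast hn
  have hv0 := grid (n:ℝ) (cth R) h2n hcthR m hm v ha hb hrec hdm
  -- peeling
  have hpeel : ∀ k, k ≤ m → ∀ j, iteratedDeriv j (U k 0) R = 0 := by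
    intro k
    induction k with
    | zero => intro _; exact hZ0 0
    | succ k ih =>
      intro hk1m
      have hUk := ih (by omega)
      have hrel := hUrel (k+1) 0 (by omega) hk1m
      rw [show (k+1)-1 = k by omega] at hrel
      have hGz : ∀ j, iteratedDeriv j (Gop n (((k+1:ℕ)):ℤ) (U (k+1) 0)) R = 0 := by
        rw [← hrel]
        exact hUk
      have hval : U (k+1) 0 R = 0 := hv0 (k+1) hk1m
      exact peel_flat (hCU (k+1) 0) hRs _ hGz hval
  intro K
  have hUm : U m 0 = F := by
    show goc n (m-m) m (Gl 0) = F
    rw [Nat.sub_self]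
    rfl
  have hFz := hpeel m le_rfl
  rw [hUm] at hFz
  exact hFz K
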